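/- For every computable function f : ℕ → ℕ there exists a code c : Nat.Partrec.Code such that c.eval 0 = Part.some (f (Nat.Partrec.Code.encodeCode c)); consequently K (f (Nat.Partrec.Code.encodeCode c)) ≤ Nat.Partrec.Code.encodeCode c. -/

import Mathlib

noncomputable def K (x : ℕ) : ℕ :=
  sInf {m : ℕ | ∃ c : Nat.Partrec.Code, Nat.Partrec.Code.encodeCode c = m ∧ c.eval 0 = Part.some x}

namespace Nat.Partrec.Code

theorem exists_eval_eq_some_of_computable {g : Code → ℕ} (hg : Computable g) :
    ∃ c : Code, ∀ n, c.eval n = Part.some (g c) := by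
  obtain ⟨c, hc⟩ := fixed_point₂ (f := fun c _ => Part.some (g c)) (hg.comp Computable.fst).partrec
  exact ⟨c, fun n => by rw [hc]⟩

theorem K_le_encodeCode {c : Code} {x : ℕ} (hc : c.eval 0 = Part.some x) :
    K x ≤ encodeCode c :=
  Nat.sInf_le ⟨c, rfl, hc⟩

end Nat.Partrec.Code

theorem self_referential_code (f : ℕ → ℕ) (hf : Computable f) :
    ∃ c : Nat.Partrec.Code,
      c.eval 0 = Part.some (f (Nat.Partrec.Code.encodeCode c)) ∧
      K (f (Nat.Partrec.Code.encodeCode c)) ≤ Nat.Partrec.Code.encodeCode c := by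
  obtain ⟨c, hc⟩ := Nat.Partrec.Code.exists_eval_eq_some_of_computable (hf.comp Computable.encode)
  exact ⟨c, hc 0, Nat.Partrec.Code.K_le_encodeCode (hc 0)⟩
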